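/- Let φ : ℝⁿ × ℝ → ℝ be smooth satisfying the Hamilton–Jacobi equation ∂φ/∂t + |∇φ|²/(2m) + V(x) = 0, and suppose Δφ(x,t) = c(t) depends only on t. Define ρ(t) = ρ₀ exp(−(1/m)∫₀ᵗ c(θ)dθ) and ψ = √(ρ(t)) e^{iφ/ħ}. Then ψ satisfies the Schrödinger equation iħ ∂ψ/∂t = −(ħ²/(2m))Δψ + Vψ exactly. -/

import Mathlib

open scoped BigOperators
open Complex

noncomputable def pd {n : ℕ} {E : Type*} [NormedAddCommGroup E] [NormedSpace ℝ E]
    (f : (Fin n → ℝ) → E) (i : Fin n) (x : Fin n → ℝ) : E :=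
  fderiv ℝ f x (Pi.single i 1)

noncomputable def lap {n : ℕ} {E : Type*} [NormedAddCommGroup E] [NormedSpace ℝ E]
    (f : (Fin n → ℝ) → E) (x : Fin n → ℝ) : E :=
  ∑ i, pd (fun y => pd f i y) i x

lemma pd_comp_clm {n : ℕ} {E F : Type*} [NormedAddCommGroup E] [NormedSpace ℝ E]
    [NormedAddCommGroup F] [NormedSpace ℝ F]
    (L : E →L[ℝ] F) {f : (Fin n → ℝ) → E} {x} (hf : DifferentiableAt ℝ f x) (i : Fin n) :
    pd (fun y => L (f y)) i x = L (pd f i x) := by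
  unfold pd
  have h : HasFDerivAt (fun y => L (f y)) (L.comp (fderiv ℝ f x)) x :=
    L.hasFDerivAt.comp x hf.hasFDerivAt
  rw [h.fderiv]
  rfl

lemma pd_cexp {n : ℕ} {f : (Fin n → ℝ) → ℂ} {x} (hf : DifferentiableAt ℝ f x) (i : Fin n) :
    pd (fun y => Complex.exp (f y)) i x = Complex.exp (f x) * pd f i x := by
  unfold pd
  have h : HasFDerivAt (fun y => Complex.exp (f y)) (Complex.exp (f x) • fderiv ℝ f x) x :=
    (Complex.hasDerivAt_exp (f x)).comp_hasFDerivAt x hf.hasFDerivAt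
  rw [h.fderiv]
  simp [smul_eq_mul]

lemma pd_const_mul {n : ℕ} {f : (Fin n → ℝ) → ℂ} {x} (hf : DifferentiableAt ℝ f x)
    (a : ℂ) (i : Fin n) :
    pd (fun y => a * f y) i x = a * pd f i x := by
  unfold pd
  rw [fderiv_const_mul hf]
  simp

lemma pd_mul {n : ℕ} {f g : (Fin n → ℝ) → ℂ} {x} (hf : DifferentiableAt ℝ f x)
    (hg : DifferentiableAt ℝ g x) (i : Fin n) :
    pd (fun y => f y * g y) i x = pd f i x * g x + f x * pd g i x := by
  unfold pd
  rw [fderiv_fun_mul hf hg]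
  simp [smul_eq_mul]
  ring

lemma pd_ofReal {n : ℕ} {f : (Fin n → ℝ) → ℝ} {x} (hf : DifferentiableAt ℝ f x) (i : Fin n) :
    pd (fun y => ((f y : ℝ) : ℂ)) i x = ((pd f i x : ℝ) : ℂ) :=
  pd_comp_clm Complex.ofRealCLM hf i

/-- main content of Lemma 3.1: if `φ` solves the Hamilton–Jacobi
equation `∂φ/∂t + |∇φ|²/(2m) + V = 0` and `Δφ(x,t) = c(t)` is spatially constant,
then `ψ = √(ρ(t)) e^{iφ/ħ}` with `ρ(t) = ρ₀ exp(−(1/m)∫₀ᵗ c)` satisfies the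
Schrödinger equation `iħ∂ψ/∂t = −(ħ²/(2m))Δψ + Vψ` exactly. -/
theorem stmt7 {n : ℕ} (m hbar ρ₀ : ℝ) (hm : 0 < m) (hhbar : 0 < hbar) (hρ₀ : 0 < ρ₀)
    (V : (Fin n → ℝ) → ℝ) (hV : ContDiff ℝ (⊤ : ℕ∞) V)
    (φ : (Fin n → ℝ) → ℝ → ℝ) (hφ : ContDiff ℝ (⊤ : ℕ∞) (Function.uncurry φ))
    (c : ℝ → ℝ) (hc : Continuous c)
    (hHJ : ∀ x t, deriv (fun s => φ x s) t +
      (∑ i, (pd (fun y => φ y t) i x) ^ 2) / (2 * m) + V x = 0)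
    (hlap : ∀ x t, lap (fun y => φ y t) x = c t)
    (ρ : ℝ → ℝ) (hρ : ∀ t, ρ t = ρ₀ * Real.exp (-(1 / m) * ∫ θ in (0:ℝ)..t, c θ))
    (ψ : (Fin n → ℝ) → ℝ → ℂ)
    (hψ : ∀ x t, ψ x t =
      (Real.sqrt (ρ t) : ℂ) * Complex.exp (Complex.I * (φ x t : ℂ) / (hbar : ℂ))) :
    ∀ x t, Complex.I * (hbar : ℂ) * deriv (fun s => ψ x s) t =
      -((hbar : ℂ) ^ 2 / (2 * (m : ℂ))) * lap (fun y => ψ y t) x + (V x : ℂ) * ψ x t := by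
  intro x t
  have hmne : (m:ℝ) ≠ 0 := hm.ne'
  have hbne : (hbar:ℝ) ≠ 0 := hhbar.ne'
  have hmC : (m:ℂ) ≠ 0 := by exact_mod_cast hmne
  have hbC : (hbar:ℂ) ≠ 0 := by exact_mod_cast hbne
  -- spatial slice
  set Φ : (Fin n → ℝ) → ℝ := fun y => φ y t with hΦdef
  have hΦ : ContDiff ℝ (⊤ : ℕ∞) Φ := hφ.comp (contDiff_id.prodMk contDiff_const)
  have hΦd : Differentiable ℝ Φ := hΦ.differentiable (by simp)
  have hpdΦ : ∀ i, Differentiable ℝ (fun y => pd Φ i y) := by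
    intro i
    have : ContDiff ℝ (⊤ : ℕ∞) (fun y => fderiv ℝ Φ y (Pi.single i 1)) :=
      (hΦ.fderiv_right (by simp)).clm_apply contDiff_const
    exact this.differentiable (by simp)
  have hΦC : Differentiable ℝ (fun y => ((Φ y : ℝ) : ℂ)) :=
    Complex.ofRealCLM.differentiable.comp hΦd
  set E : (Fin n → ℝ) → ℂ := fun y => Complex.exp (Complex.I * (Φ y : ℂ) / (hbar:ℂ)) with hEdef
  have hGd : Differentiable ℝ (fun y => Complex.I * (Φ y : ℂ) / (hbar:ℂ)) := by
    have h1 : (fun y => Complex.I * (Φ y : ℂ) / (hbar:ℂ)) =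
        fun y => (Complex.I / (hbar:ℂ)) * ((Φ y : ℝ) : ℂ) := by
      funext y; ring
    rw [h1]; exact hΦC.const_mul _
  have hEd : Differentiable ℝ E := hGd.cexp
  have pdG : ∀ (i : Fin n) y, pd (fun z => Complex.I * (Φ z : ℂ) / (hbar:ℂ)) i y =
      Complex.I / (hbar:ℂ) * ((pd Φ i y : ℝ) : ℂ) := by
    intro i y
    have h1 : (fun z => Complex.I * (Φ z : ℂ) / (hbar:ℂ)) =
        fun z => (Complex.I / (hbar:ℂ)) * ((Φ z : ℝ) : ℂ) := by
      funext z; ring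
    rw [h1, pd_const_mul (hΦC y) _ i, pd_ofReal (hΦd y) i]
  have pdE : ∀ (i : Fin n) y, pd E i y = E y * (Complex.I / (hbar:ℂ) * ((pd Φ i y : ℝ) : ℂ)) := by
    intro i y
    rw [hEdef]
    rw [pd_cexp (hGd y) i, pdG i y]
  set A : ℝ := Real.sqrt (ρ t) with hAdef
  have pdψ : ∀ (i : Fin n) y, pd (fun z => ψ z t) i y =
      (A:ℂ) * (E y * (Complex.I / (hbar:ℂ) * ((pd Φ i y : ℝ) : ℂ))) := by
    intro i y
    have hfun : (fun z => ψ z t) = fun z => (A:ℂ) * E z := by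
      funext z; rw [hψ z t]
    rw [hfun, pd_const_mul (hEd y) _ i, pdE i y]
  -- second derivatives
  have hpdΦC : ∀ i, Differentiable ℝ (fun y => ((pd Φ i y : ℝ) : ℂ)) := fun i =>
    Complex.ofRealCLM.differentiable.comp (hpdΦ i)
  have pd2ψ : ∀ i : Fin n, pd (fun y => pd (fun z => ψ z t) i y) i x =
      (A:ℂ) * (E x * (Complex.I / (hbar:ℂ) * ((pd Φ i x : ℝ) : ℂ)) *
        (Complex.I / (hbar:ℂ) * ((pd Φ i x : ℝ) : ℂ)) +
      E x * (Complex.I / (hbar:ℂ) * ((pd (fun y => pd Φ i y) i x : ℝ) : ℂ))) := by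
    intro i
    have hfun : (fun y => pd (fun z => ψ z t) i y) =
        fun y => (A:ℂ) * (E y * (Complex.I / (hbar:ℂ) * ((pd Φ i y : ℝ) : ℂ))) := by
      funext y; exact pdψ i y
    have hginner : Differentiable ℝ (fun y => Complex.I / (hbar:ℂ) * ((pd Φ i y : ℝ) : ℂ)) :=
      (hpdΦC i).const_mul _
    rw [hfun, pd_const_mul (f := fun y => E y * (Complex.I / (hbar:ℂ) * ((pd Φ i y : ℝ) : ℂ))) ((hEd x).mul (hginner x)) _ i,
      pd_mul (hEd x) (hginner x) i, pdE i x,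
      pd_const_mul ((hpdΦC i) x) _ i, pd_ofReal ((hpdΦ i) x) i]
  -- laplacian of ψ
  set S : ℝ := ∑ i, (pd Φ i x) ^ 2 with hSdef
  have hlapΦ : ∑ i, pd (fun y => pd Φ i y) i x = c t := hlap x t
  have hlapψ : lap (fun y => ψ y t) x =
      (A:ℂ) * E x * (-(S:ℂ) / (hbar:ℂ)^2 + Complex.I * (c t : ℂ) / (hbar:ℂ)) := by
    unfold lap
    have : ∀ i : Fin n, pd (fun y => pd (fun z => ψ z t) i y) i x =
        (A:ℂ) * E x * (-(((pd Φ i x : ℝ):ℂ))^2 / (hbar:ℂ)^2 +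
          Complex.I * ((pd (fun y => pd Φ i y) i x : ℝ):ℂ) / (hbar:ℂ)) := by
      intro i
      rw [pd2ψ i]
      have : (Complex.I / (hbar:ℂ))^2 = -1 / (hbar:ℂ)^2 := by
        rw [div_pow, Complex.I_sq]
      field_simp
      ring_nf
      simp [Complex.I_sq]
      ring
    rw [Finset.sum_congr rfl (fun i _ => this i)]
    rw [← Finset.mul_sum, Finset.sum_add_distrib]
    rw [← Finset.sum_div, ← Finset.sum_div]
    have e1 : (∑ i : Fin n, -((pd Φ i x : ℝ):ℂ)^2) = -((S:ℝ):ℂ) := by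
      rw [hSdef]
      push_cast
      simp
    have e2 : (∑ i : Fin n, Complex.I * ((pd (fun y => pd Φ i y) i x : ℝ):ℂ)) =
        Complex.I * ((c t : ℝ):ℂ) := by
      rw [← Finset.mul_sum]
      congr 1
      rw [← hlapΦ]
      push_cast
      ring
    rw [e1, e2]
  -- time derivative
  have hsqrt : ∀ s, Real.sqrt (ρ s) =
      Real.sqrt ρ₀ * Real.exp (-(1/(2*m)) * ∫ θ in (0:ℝ)..s, c θ) := by
    intro s
    rw [hρ s, Real.sqrt_mul hρ₀.le]
    congr 1
    have h2 : -(1/m) * ∫ θ in (0:ℝ)..s, c θ =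
        (-(1/(2*m)) * ∫ θ in (0:ℝ)..s, c θ) + (-(1/(2*m)) * ∫ θ in (0:ℝ)..s, c θ) := by
      field_simp
      ring
    rw [h2, Real.exp_add, Real.sqrt_mul_self (Real.exp_pos _).le]
  have hJ : HasDerivAt (fun s => ∫ θ in (0:ℝ)..s, c θ) (c t) t :=
    intervalIntegral.integral_hasDerivAt_right (hc.intervalIntegrable 0 t)
      hc.aestronglyMeasurable.stronglyMeasurableAtFilter hc.continuousAt
  have hA : HasDerivAt (fun s => Real.sqrt (ρ s)) (A * (-(1/(2*m)) * c t)) t := by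
    have h1 : HasDerivAt (fun s => -(1/(2*m)) * ∫ θ in (0:ℝ)..s, c θ) (-(1/(2*m)) * c t) t :=
      hJ.const_mul _
    have h2 := (h1.exp).const_mul (Real.sqrt ρ₀)
    have hfun : (fun s => Real.sqrt (ρ s)) =
        fun s => Real.sqrt ρ₀ * Real.exp (-(1/(2*m)) * ∫ θ in (0:ℝ)..s, c θ) := by
      funext s; exact hsqrt s
    rw [hfun, hAdef, hsqrt t]
    refine h2.congr_deriv ?_
    ring
  set D : ℝ := deriv (fun s => φ x s) t with hDdef
  have hφx : HasDerivAt (fun s => φ x s) D t := by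
    have hdd : Differentiable ℝ (fun s => φ x s) :=
      (hφ.comp (contDiff_const.prodMk contDiff_id)).differentiable (by simp)
    exact (hdd t).hasDerivAt
  set B : ℂ := Complex.exp (Complex.I * (φ x t : ℂ) / (hbar:ℂ)) with hBdef
  have hB : HasDerivAt (fun s => Complex.exp (Complex.I * (φ x s : ℂ) / (hbar:ℂ)))
      (B * (Complex.I * (D:ℂ) / (hbar:ℂ))) t := by
    have h1 : HasDerivAt (fun s => ((φ x s : ℝ) : ℂ)) ((D:ℝ):ℂ) t := hφx.ofReal_comp
    have h2 : HasDerivAt (fun s => Complex.I * ((φ x s:ℝ):ℂ) / (hbar:ℂ))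
        (Complex.I * ((D:ℝ):ℂ) / (hbar:ℂ)) t := by
      have h3 := h1.const_mul Complex.I
      exact h3.div_const _
    exact h2.cexp
  have hψt : HasDerivAt (fun s => ψ x s)
      (((A * (-(1/(2*m)) * c t) : ℝ):ℂ) * B + ((A:ℝ):ℂ) * (B * (Complex.I * ((D:ℝ):ℂ)/(hbar:ℂ)))) t := by
    have hfun : (fun s => ψ x s) =
        fun s => ((Real.sqrt (ρ s) : ℝ):ℂ) * Complex.exp (Complex.I * (φ x s:ℂ)/(hbar:ℂ)) := by
      funext s; exact hψ x s
    rw [hfun]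
    exact hA.ofReal_comp.mul hB
  rw [hψt.deriv, hlapψ, hψ x t, ← hBdef]
  have hEB : E x = B := rfl
  rw [hEB]
  have hD : D = -(S/(2*m)) - V x := by
    have hh := hHJ x t
    rw [← hΦdef] at hh
    rw [← hDdef, ← hSdef] at hh
    linarith
  rw [hD]
  push_cast
  field_simp
  ring_nf
  simp [Complex.I_sq]
  ring
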